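/- Let s : ℝ^n → ℝ^C be affine and p = softmax(s). Define vector fields X_i(x) = ∇ log p_i(x) on ℝ^n. Then for all i, j, the Lie bracket [X_i, X_j](x) = H(log p_i)(x) X_j(x) − H(log p_j)(x) X_i(x) lies in span{X_1(x), …, X_C(x)}. -/

import Mathlib

/-- Coordinate gradient of a scalar function on `ℝ^n`. -/
noncomputable def grad {n : ℕ} (f : (Fin n → ℝ) → ℝ) (x : Fin n → ℝ) : Fin n → ℝ :=
  fun i => fderiv ℝ f x (Pi.single i 1)

/-- The softmax probabilities obtained from a score function `s`. -/
noncomputable def softmaxP {n C : ℕ} (s : (Fin n → ℝ) → Fin C → ℝ) (i : Fin C)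
    (x : Fin n → ℝ) : ℝ :=
  Real.exp (s x i) / ∑ j, Real.exp (s x j)


/-- Coordinate Hessian matrix of a scalar function on `ℝ^n`. -/
noncomputable def hess {n : ℕ} (f : (Fin n → ℝ) → ℝ) (x : Fin n → ℝ) :
    Matrix (Fin n) (Fin n) ℝ :=
  fun i j => fderiv ℝ (fun y => fderiv ℝ f y (Pi.single j 1)) x (Pi.single i 1)

/-! Since `log p_k = s_k - log ∑ exp s_r`, for affine `s` the Hessian of `log p_k` is minus the
Hessian of the log-partition function, `-∑ r, p_r • X_r ⊗ a_r` with `a_r` the `r`-th row of `A`,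
whatever `k` is. Every vector `H v` is therefore a combination of the `X_r`, and so is the
bracket `H_i X_j - H_j X_i`. -/

open Matrix

lemma sum_exp_pos {ι : Type*} [Fintype ι] [Nonempty ι] (v : ι → ℝ) : 0 < ∑ r, Real.exp (v r) :=
  Finset.sum_pos (fun _ _ => Real.exp_pos _) Finset.univ_nonempty

section Softmax

variable {n C : ℕ} [Nonempty (Fin C)] (s : (Fin n → ℝ) → Fin C → ℝ)

lemma softmaxP_pos (k : Fin C) (x : Fin n → ℝ) : 0 < softmaxP s k x :=
  div_pos (Real.exp_pos _) (sum_exp_pos _)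

lemma log_softmaxP (k : Fin C) (x : Fin n → ℝ) :
    Real.log (softmaxP s k x) = s x k - Real.log (∑ r, Real.exp (s x r)) := by
  rw [softmaxP, Real.log_div (Real.exp_ne_zero _) (sum_exp_pos _).ne', Real.log_exp]

variable {s} {L : Fin C → (Fin n → ℝ) →L[ℝ] ℝ} {x : Fin n → ℝ}

lemma hasFDerivAt_log_softmaxP (hs : ∀ r, HasFDerivAt (fun y => s y r) (L r) x) (k : Fin C) :
    HasFDerivAt (fun y => Real.log (softmaxP s k y)) (L k - ∑ r, softmaxP s r x • L r) x := by
  have hlogZ := (HasFDerivAt.fun_sum fun r _ => (hs r).exp).log (sum_exp_pos (s x)).ne'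
  rw [funext (log_softmaxP s k)]
  refine ((hs k).fun_sub hlogZ).congr_fderiv ?_
  simp only [Finset.smul_sum, smul_smul, softmaxP, div_eq_inv_mul]

lemma hasFDerivAt_softmaxP {k : Fin C}
    (h : DifferentiableAt ℝ (fun y => Real.log (softmaxP s k y)) x) :
    HasFDerivAt (softmaxP s k)
      (softmaxP s k x • fderiv ℝ (fun y => Real.log (softmaxP s k y)) x) x := by
  simpa only [Real.exp_log (softmaxP_pos s _ _)] using h.hasFDerivAt.exp

end Softmax

lemma HasFDerivAt.grad_eq {n : ℕ} {f : (Fin n → ℝ) → ℝ} {L : (Fin n → ℝ) →L[ℝ] ℝ}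
    {x : Fin n → ℝ} (h : HasFDerivAt f L x) : grad f x = fun m => L (Pi.single m 1) := by
  unfold grad
  rw [h.fderiv]

section Affine

variable {n C : ℕ} {A : Matrix (Fin C) (Fin n) ℝ} {b : Fin C → ℝ} {s : (Fin n → ℝ) → Fin C → ℝ}

lemma hasFDerivAt_affine_apply (hs : ∀ x, s x = A *ᵥ x + b) (r : Fin C) (x : Fin n → ℝ) :
    HasFDerivAt (fun y => s y r)
      (LinearMap.toContinuousLinearMap ((LinearMap.proj r).comp A.mulVecLin)) x := by
  simp only [hs, Pi.add_apply]
  exact (LinearMap.toContinuousLinearMap ((LinearMap.proj r).comp A.mulVecLin)).hasFDerivAt.add_const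
    (b r)

variable [Nonempty (Fin C)]

lemma grad_log_softmaxP_affine (hs : ∀ x, s x = A *ᵥ x + b) (k : Fin C) (x : Fin n → ℝ) :
    grad (fun y => Real.log (softmaxP s k y)) x = A k - ∑ r, softmaxP s r x • A r := by
  rw [(hasFDerivAt_log_softmaxP (fun r => hasFDerivAt_affine_apply hs r x) k).grad_eq]
  ext m
  simp

lemma hess_log_softmaxP_affine (hs : ∀ x, s x = A *ᵥ x + b) (k : Fin C) (x : Fin n → ℝ) :
    hess (fun y => Real.log (softmaxP s k y)) x =
      -∑ r, softmaxP s r x • vecMulVec (grad (fun y => Real.log (softmaxP s r y)) x) (A r) := by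
  ext m l
  have hpartial : (fun y => fderiv ℝ (fun y' => Real.log (softmaxP s k y')) y (Pi.single l 1)) =
      fun y => A k l - ∑ r, softmaxP s r y * A r l := by
    ext y
    exact (congrFun (grad_log_softmaxP_affine hs k y) l).trans (by simp)
  have hlog (r : Fin C) := hasFDerivAt_log_softmaxP (fun r' => hasFDerivAt_affine_apply hs r' x) r
  have hD : HasFDerivAt (fun y => A k l - ∑ r, softmaxP s r y * A r l) _ x :=
    (hasFDerivAt_const (A k l) x).sub <| HasFDerivAt.fun_sum fun r _ =>
      (hasFDerivAt_softmaxP (hlog r).differentiableAt).mul_const (A r l)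
  rw [hess, hpartial, hD.fderiv]
  simp only [zero_sub, _root_.neg_apply, _root_.sum_apply, _root_.smul_apply, Matrix.neg_apply,
    Matrix.sum_apply, Matrix.smul_apply, vecMulVec_apply, smul_eq_mul, neg_inj]
  exact Finset.sum_congr rfl fun r _ => by unfold grad; ring

lemma hess_log_softmaxP_affine_mulVec_mem_span (hs : ∀ x, s x = A *ᵥ x + b) (k : Fin C)
    (x v : Fin n → ℝ) :
    hess (fun y => Real.log (softmaxP s k y)) x *ᵥ v ∈
      Submodule.span ℝ (Set.range fun r => grad (fun y => Real.log (softmaxP s r y)) x) := by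
  rw [hess_log_softmaxP_affine hs, neg_mulVec, sum_mulVec]
  refine neg_mem (Submodule.sum_mem _ fun r _ => ?_)
  rw [smul_mulVec, vecMulVec_mulVec, op_smul_eq_smul]
  exact Submodule.smul_mem _ _ (Submodule.smul_mem _ _ (Submodule.subset_span ⟨r, rfl⟩))

end Affine

theorem stmt11 {n C : ℕ} (A : Matrix (Fin C) (Fin n) ℝ) (b : Fin C → ℝ)
    (s : (Fin n → ℝ) → Fin C → ℝ) (hs : ∀ x, s x = A.mulVec x + b)
    (i j : Fin C) (x : Fin n → ℝ) :
    (hess (fun y => Real.log (softmaxP s i y)) x).mulVec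
        (grad (fun y => Real.log (softmaxP s j y)) x) -
      (hess (fun y => Real.log (softmaxP s j y)) x).mulVec
        (grad (fun y => Real.log (softmaxP s i y)) x) ∈
      Submodule.span ℝ (Set.range fun k => grad (fun y => Real.log (softmaxP s k y)) x) := by
  have : Nonempty (Fin C) := ⟨i⟩
  exact sub_mem (hess_log_softmaxP_affine_mulVec_mem_span hs i x _)
    (hess_log_softmaxP_affine_mulVec_mem_span hs j x _)
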